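/- The set of coefficient vectors (a₀, …, a_{n-1}) ∈ ℝⁿ for which the monic polynomial λⁿ + a_{n-1}λ^{n-1} + ⋯ + a₀ has all roots in the open unit disk is an open and bounded subset of ℝⁿ. -/

import Mathlib

/-!
Boundedness is Vieta: the coefficients of a monic polynomial of degree `n` whose roots lie in the
closed unit disc are bounded by `n.choose (n / 2)`. For openness, Cauchy's bound keeps the roots of
all polynomials with coefficients near `a` inside one compact disc `‖z‖ ≤ R`; the polynomial of a
Schur-stable `a` has no zero on the compact annulus `1 ≤ ‖z‖ ≤ R`, and by compactness neither do the
polynomials with nearby coefficients.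
-/

open Polynomial Filter Topology

theorem isOpen_setOf_forall_mem_of_eventually_mem_isCompact {X Y : Type*} [TopologicalSpace X]
    [TopologicalSpace Y] {Z : Set (X × Y)} {U : Set Y} (hZ : IsClosed Z) (hU : IsOpen U)
    (hloc : ∀ x₀, ∃ L, IsCompact L ∧ ∀ᶠ x in 𝓝 x₀, ∀ y, (x, y) ∈ Z → y ∈ L) :
    IsOpen {x | ∀ y, (x, y) ∈ Z → y ∈ U} := by
  refine isOpen_iff_mem_nhds.2 fun x₀ hx₀ => ?_
  obtain ⟨L, hL, hZL⟩ := hloc x₀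
  have hoff : ∀ᶠ x in 𝓝 x₀, ∀ y ∈ L \ U, (x, y) ∉ Z :=
    (hL.diff hU).eventually_forall_of_forall_eventually fun y hy =>
      hZ.isOpen_compl.mem_nhds fun hxy => hy.2 (hx₀ y hxy)
  filter_upwards [hoff, hZL] with x hxoff hxL y hxy
  by_contra hyU
  exact hxoff y ⟨hxL y hxy, hyU⟩ hxy

namespace Polynomial

section CommSemiring

variable {R : Type*} [CommSemiring R] {n : ℕ}

noncomputable def monicOfCoeffs (a : Fin n → R) : R[X] :=
  X ^ n + ∑ i : Fin n, C (a i) * X ^ (i : ℕ)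

theorem monic_monicOfCoeffs (a : Fin n → R) : (monicOfCoeffs a).Monic :=
  monic_X_pow_add (degree_sum_fin_lt a)

theorem natDegree_monicOfCoeffs [Nontrivial R] (a : Fin n → R) :
    (monicOfCoeffs a).natDegree = n := by
  rw [monicOfCoeffs, natDegree_add_eq_left_of_degree_lt, natDegree_X_pow]
  simpa only [degree_X_pow] using degree_sum_fin_lt a

theorem coeff_monicOfCoeffs_of_lt (a : Fin n → R) {i : ℕ} (hi : i < n) :
    (monicOfCoeffs a).coeff i = a ⟨i, hi⟩ := by
  rw [monicOfCoeffs, coeff_add, coeff_X_pow, if_neg hi.ne, zero_add, finsetSum_coeff]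
  simp only [coeff_C_mul, coeff_X_pow]
  rw [Finset.sum_eq_single ⟨i, hi⟩] <;> simp +contextual [Fin.ext_iff, eq_comm]

theorem aeval_monicOfCoeffs {A : Type*} [Semiring A] [Algebra R A] (a : Fin n → R) (x : A) :
    aeval x (monicOfCoeffs a) = x ^ n + ∑ i : Fin n, algebraMap R A (a i) * x ^ (i : ℕ) := by
  simp [monicOfCoeffs]

theorem continuous_aeval_monicOfCoeffs {A : Type*} [Semiring A] [Algebra R A]
    [TopologicalSpace R] [TopologicalSpace A] [IsTopologicalSemiring A] [ContinuousSMul R A] :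
    Continuous fun q : (Fin n → R) × A => aeval q.2 (monicOfCoeffs q.1) := by
  simp only [aeval_monicOfCoeffs]
  fun_prop

end CommSemiring

theorem norm_lt_of_aeval_monicOfCoeffs_eq_zero {K L : Type*} [NormedField K] [NormedField L]
    [NormedAlgebra K L] {n : ℕ} {a : Fin n → K} {z : L} (hz : aeval z (monicOfCoeffs a) = 0) :
    ‖z‖ < ‖a‖ + 1 := by
  set p := (monicOfCoeffs a).map (algebraMap K L)
  have hp : p.Monic := (monic_monicOfCoeffs a).map _
  have hroot : p.IsRoot z := by rwa [IsRoot, eval_map_algebraMap]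
  have hbound : cauchyBound p ≤ ‖a‖₊ + 1 := by
    rw [cauchyBound, hp.leadingCoeff, nnnorm_one, div_one, (monic_monicOfCoeffs a).natDegree_map,
      natDegree_monicOfCoeffs]
    gcongr
    refine Finset.sup_le fun i hi => ?_
    rw [coeff_map, coeff_monicOfCoeffs_of_lt a (Finset.mem_range.1 hi), nnnorm_algebraMap']
    exact nnnorm_le_pi_nnnorm a _
  exact_mod_cast (hroot.norm_lt_cauchyBound hp.ne_zero).trans_le hbound

theorem exists_isCompact_eventually_aeval_monicOfCoeffs_eq_zero_mem {n : ℕ} (a : Fin n → ℝ) :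
    ∃ L : Set ℂ, IsCompact L ∧
      ∀ᶠ b in 𝓝 a, ∀ z : ℂ, aeval z (monicOfCoeffs b) = 0 → z ∈ L := by
  refine ⟨Metric.closedBall 0 (‖a‖ + 2), isCompact_closedBall _ _, ?_⟩
  filter_upwards [continuous_norm.continuousAt.eventually_lt continuousAt_const
    (lt_add_one ‖a‖)] with b hb z hz
  rw [mem_closedBall_zero_iff]
  linarith [norm_lt_of_aeval_monicOfCoeffs_eq_zero hz]

theorem abs_le_choose_of_aeval_monicOfCoeffs_eq_zero {n : ℕ} {a : Fin n → ℝ}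
    (ha : ∀ z : ℂ, aeval z (monicOfCoeffs a) = 0 → ‖z‖ ≤ 1) (i : Fin n) :
    |a i| ≤ n.choose (n / 2) := by
  have hroots : ∀ z ∈ ((monicOfCoeffs a).map (algebraMap ℝ ℂ)).roots, ‖z‖ ≤ 1 := fun z hz =>
    ha z (by rw [aeval_def, ← eval_map]; exact (mem_roots'.1 hz).2)
  have := coeff_bdd_of_roots_le _ (monic_monicOfCoeffs a) (IsAlgClosed.splits _)
    (natDegree_monicOfCoeffs a).le hroots i
  simpa [coeff_monicOfCoeffs_of_lt a i.isLt] using this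

end Polynomial

/-- The set of coefficient vectors in `ℝⁿ` whose monic polynomial
`λⁿ + a_{n-1}λ^{n-1} + ⋯ + a₀` has all roots in the open unit disk is open and
bounded. -/
theorem schur_coeff_set_isOpen_isBounded (n : ℕ) :
    IsOpen {a : Fin n → ℝ |
      ∀ z : ℂ, aeval z (X ^ n + ∑ i : Fin n, C (a i) * X ^ (i : ℕ) : ℝ[X]) = 0 →
        ‖z‖ < 1} ∧
    Bornology.IsBounded {a : Fin n → ℝ |
      ∀ z : ℂ, aeval z (X ^ n + ∑ i : Fin n, C (a i) * X ^ (i : ℕ) : ℝ[X]) = 0 →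
        ‖z‖ < 1} := by
  constructor
  · exact isOpen_setOf_forall_mem_of_eventually_mem_isCompact
      (Z := {q : (Fin n → ℝ) × ℂ | aeval q.2 (monicOfCoeffs q.1) = 0}) (U := {z | ‖z‖ < 1})
      (isClosed_eq continuous_aeval_monicOfCoeffs continuous_const)
      (isOpen_lt continuous_norm continuous_const)
      exists_isCompact_eventually_aeval_monicOfCoeffs_eq_zero_mem
  · refine isBounded_iff_forall_norm_le.2 ⟨n.choose (n / 2), fun a ha => ?_⟩
    exact (pi_norm_le_iff_of_nonneg (by positivity)).2 fun i =>
      abs_le_choose_of_aeval_monicOfCoeffs_eq_zero (fun z hz => (ha z hz).le) i
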